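/- arXiv:2009.10020 — 3 statements merged into one kernel-verified Lean document; each statement's English description precedes it below -/
import Mathlib

section
/- Let (A, r) be a population game, W symmetric, and f satisfying sgn(f_{ij}(y) − f_{ji}(y)) = sgn(r_j(y) − r_i(y)). If x ∈ X has population state y = x·1 that is a restricted Nash equilibrium (r_i(y) = r_j(y) whenever y_i, y_j > 0), then the aggregated vector field vanishes: ẏ_i = ∑_j Λ_{ij}(x)(f_{ji}(y) − f_{ij}(y)) = 0 for all i ∈ A, where Λ_{ij}(x) = ∑_{h,k} x_{ih} W_{hk} x_{jk}. -/
theorem stmt9 {A H : Type*} [Fintype A] [Fintype H]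
    (r : A → (A → ℝ) → ℝ) (f : (A → ℝ) → A → A → ℝ)
    (hf : ∀ y i j, 0 ≤ f y i j)
    (hsgn : ∀ (y : A → ℝ) i j, Real.sign (f y i j - f y j i) = Real.sign (r j y - r i y))
    (W : H → H → ℝ) (hWsym : ∀ h k, W h k = W k h) (hW : ∀ h k, 0 ≤ W h k)
    (η : H → ℝ)
    (x : A → H → ℝ) (hx : ∀ i h, 0 ≤ x i h) (hcol : ∀ h, ∑ i, x i h = η h)
    (y : A → ℝ) (hy : ∀ i, y i = ∑ h, x i h)
    (hnash : ∀ i j, 0 < y i → 0 < y j → r i y = r j y) :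
    ∀ i : A, ∑ j : A, (∑ h, ∑ k, x i h * W h k * x j k) * (f y j i - f y i j) = 0 := by
  have hynn : ∀ i, 0 ≤ y i := fun i => (hy i) ▸ Finset.sum_nonneg fun h _ => hx i h
  have hzero : ∀ i, y i = 0 → ∀ h, x i h = 0 := by
    intro i h0 h
    have := (Finset.sum_eq_zero_iff_of_nonneg (fun h _ => hx i h)).mp ((hy i).symm.trans h0)
    exact this h (Finset.mem_univ h)
  intro i
  apply Finset.sum_eq_zero
  intro j _
  rcases eq_or_lt_of_le (hynn i) with hi | hi
  · have : ∀ h k, x i h * W h k * x j k = 0 := fun h k => by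
      rw [hzero i hi.symm h]; ring
    simp [this]
  rcases eq_or_lt_of_le (hynn j) with hj | hj
  · have : ∀ h k, x i h * W h k * x j k = 0 := fun h k => by
      rw [hzero j hj.symm k]; ring
    simp [this]
  · have hr := hnash i j hi hj
    have h1 := hsgn y i j
    rw [hr, sub_self, Real.sign_zero] at h1
    have : f y i j - f y j i = 0 := by
      rcases lt_trichotomy (f y i j - f y j i) 0 with h | h | h
      · simp [Real.sign_of_neg h] at h1
      · exact h
      · simp [Real.sign_of_pos h] at h1
    have : f y j i - f y i j = 0 := by linarith
    rw [this, mul_zero]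
end

section
/- Let (A, r) be a potential population game with differentiable potential Φ : Y → ℝ satisfying ∂Φ/∂y_j − ∂Φ/∂y_i = r_j(y) − r_i(y) for all i, j, y. Let W be symmetric nonnegative and f satisfy sgn(f_{ij}(y) − f_{ji}(y)) = sgn(r_j(y) − r_i(y)). Then for every x ∈ X with y = x·1, the derivative of Φ along the aggregated imitation vector field satisfies ∑_{i∈A} (∂Φ/∂y_i)(y) · ∑_{j∈A} Λ_{ij}(x)(f_{ji}(y) − f_{ij}(y)) = (1/2) ∑_{i,j∈A} Λ_{ij}(x) (f_{ji}(y) − f_{ij}(y)) (r_i(y) − r_j(y)) ≥ 0. -/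
lemma sign_mul_nonneg (a b : ℝ) (h : Real.sign a = Real.sign b) : 0 ≤ a * b := by
  rcases lt_trichotomy b 0 with hb | hb | hb
  · rw [Real.sign_of_neg hb] at h
    rcases lt_trichotomy a 0 with ha | ha | ha
    · exact le_of_lt (mul_pos_of_neg_of_neg ha hb)
    · simp [ha]
    · rw [Real.sign_of_pos ha] at h; norm_num at h
  · simp [hb]
  · rw [Real.sign_of_pos hb] at h
    rcases lt_trichotomy a 0 with ha | ha | ha
    · rw [Real.sign_of_neg ha] at h; norm_num at h
    · simp [ha]
    · exact le_of_lt (mul_pos ha hb)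

theorem stmt10 {A H : Type*} [Fintype A] [Fintype H] [DecidableEq A]
    (r : A → (A → ℝ) → ℝ)
    (Φ : (A → ℝ) → ℝ) (hΦ : Differentiable ℝ Φ)
    (hpot : ∀ (y : A → ℝ) i j,
      fderiv ℝ Φ y (Pi.single j 1) - fderiv ℝ Φ y (Pi.single i 1) = r j y - r i y)
    (W : H → H → ℝ) (hW : ∀ h k, 0 ≤ W h k) (hWsym : ∀ h k, W h k = W k h)
    (f : (A → ℝ) → A → A → ℝ) (hf : ∀ y i j, 0 ≤ f y i j)
    (hsgn : ∀ (y : A → ℝ) i j, Real.sign (f y i j - f y j i) = Real.sign (r j y - r i y))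
    (η : H → ℝ) (hη : ∀ h, 0 < η h) (hηsum : ∑ h, η h = 1)
    (x : A → H → ℝ) (hx : ∀ i h, 0 ≤ x i h) (hcol : ∀ h, ∑ i, x i h = η h)
    (y : A → ℝ) (hy : ∀ i, y i = ∑ h, x i h) :
    (∑ i : A, fderiv ℝ Φ y (Pi.single i 1) *
        (∑ j : A, (∑ h, ∑ k, x i h * W h k * x j k) * (f y j i - f y i j))
      = (1/2) * ∑ i : A, ∑ j : A,
          (∑ h, ∑ k, x i h * W h k * x j k) * (f y j i - f y i j) * (r i y - r j y))
    ∧ 0 ≤ (1/2) * ∑ i : A, ∑ j : A,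
        (∑ h, ∑ k, x i h * W h k * x j k) * (f y j i - f y i j) * (r i y - r j y) := by
  set Λ : A → A → ℝ := fun i j => ∑ h, ∑ k, x i h * W h k * x j k with hΛ
  set D : A → ℝ := fun i => fderiv ℝ Φ y (Pi.single i 1) with hD
  set g : A → A → ℝ := fun i j => f y j i - f y i j with hg
  have hΛsym : ∀ i j, Λ i j = Λ j i := by
    intro i j
    show (∑ h, ∑ k, x i h * W h k * x j k) = ∑ h, ∑ k, x j h * W h k * x i k
    rw [Finset.sum_comm]
    refine Finset.sum_congr rfl fun h _ => Finset.sum_congr rfl fun k _ => ?_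
    rw [hWsym]; ring
  have hΛnn : ∀ i j, 0 ≤ Λ i j := fun i j =>
    Finset.sum_nonneg fun h _ => Finset.sum_nonneg fun k _ =>
      mul_nonneg (mul_nonneg (hx i h) (hW h k)) (hx j k)
  constructor
  · have swap : ∑ i, ∑ j, D i * (Λ i j * g i j) = ∑ i, ∑ j, D j * (Λ i j * (- g i j)) := by
      rw [Finset.sum_comm]
      refine Finset.sum_congr rfl fun i _ => Finset.sum_congr rfl fun j _ => ?_
      rw [hΛsym i j]
      have : g j i = - g i j := by rw [hg]; ring
      rw [this]
    have expand : ∑ i, D i * (∑ j, Λ i j * g i j) = ∑ i, ∑ j, D i * (Λ i j * g i j) := by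
      simp [Finset.mul_sum]
    calc ∑ i, D i * (∑ j, Λ i j * g i j)
        = (1/2) * (∑ i, ∑ j, D i * (Λ i j * g i j) + ∑ i, ∑ j, D j * (Λ i j * (- g i j))) := by
          rw [← swap, expand]; ring
      _ = (1/2) * ∑ i, ∑ j, Λ i j * g i j * (r i y - r j y) := by
          rw [← Finset.sum_add_distrib]
          congr 1
          refine Finset.sum_congr rfl fun i _ => ?_
          rw [← Finset.sum_add_distrib]
          refine Finset.sum_congr rfl fun j _ => ?_
          have h1 : D i - D j = r i y - r j y := hpot y j i
          have : D i = D j + (r i y - r j y) := by linarith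
          rw [this]; ring
  · refine mul_nonneg (by norm_num) (Finset.sum_nonneg fun i _ => Finset.sum_nonneg fun j _ => ?_)
    have hs : Real.sign (g i j) = Real.sign (r i y - r j y) := hsgn y j i
    rw [mul_assoc]
    exact mul_nonneg (hΛnn i j) (sign_mul_nonneg _ _ hs)
end

section
/- In the setting of a potential population game with symmetric W having strictly positive diagonal entries, irreducible W, x ∈ X with y = x·1, and f satisfying Assumption 1, the Lyapunov derivative (1/2)∑_{i,j} Λ_{ij}(x)(f_{ji}(y) − f_{ij}(y))(r_i(y) − r_j(y)) equals zero if and only if r_i(y) = r_j(y) for all i, j with y_i > 0 and y_j > 0 (i.e., y is a restricted Nash equilibrium). -/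
/-!
By Assumption 1 each summand `Λᵢⱼ (fⱼᵢ - fᵢⱼ)(rᵢ - rⱼ)` is nonnegative, and it vanishes exactly
when `Λᵢⱼ = 0` or `rᵢ = rⱼ`; so the derivative is zero iff `rᵢ = rⱼ` whenever `Λᵢⱼ > 0`, i.e.
whenever some population `h` plays `i`, some population `k` plays `j`, and `W h k > 0`. Since every
population plays some action, rewards can be propagated along a `W`-path from any population
playing `i` to any population playing `j`; the positive diagonal covers paths of length zero.
-/

open Finset

namespace Real

lemma mul_nonneg_of_sign_eq {u v : ℝ} (h : sign u = sign v) : 0 ≤ u * v := by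
  rcases lt_trichotomy u 0 with hu | rfl | hu <;> rcases lt_trichotomy v 0 with hv | rfl | hv <;>
    simp [sign_of_neg, sign_of_pos, *] at h ⊢ <;> nlinarith

lemma mul_mul_nonneg_of_sign_eq {c u v : ℝ} (hc : 0 ≤ c) (h : sign u = sign v) :
    0 ≤ c * u * v :=
  mul_assoc c u v ▸ mul_nonneg hc (mul_nonneg_of_sign_eq h)

lemma mul_mul_eq_zero_iff_of_sign_eq {c u v : ℝ} (hc : 0 ≤ c) (h : sign u = sign v) :
    c * u * v = 0 ↔ (0 < c → v = 0) := by
  have huv : u = 0 ↔ v = 0 := by rw [← sign_eq_zero_iff, h, sign_eq_zero_iff]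
  rw [mul_assoc, mul_eq_zero, mul_eq_zero, huv, or_self, hc.lt_iff_ne', ne_eq, imp_iff_not_or,
    not_not]

end Real

lemma mul_pos_iff_of_nonneg_left {a b : ℝ} (ha : 0 ≤ a) :
    0 < a * b ↔ 0 < a ∧ 0 < b := by
  rw [mul_pos_iff]
  constructor
  · rintro (h | ⟨ha', -⟩)
    · exact h
    · exact absurd ha ha'.not_ge
  · exact Or.inl

lemma Fintype.sum_sum_eq_zero_iff_of_nonneg {ι κ : Type*} [Fintype ι] [Fintype κ]
    {F : ι → κ → ℝ} (hF : ∀ i j, 0 ≤ F i j) :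
    ∑ i, ∑ j, F i j = 0 ↔ ∀ i j, F i j = 0 := by
  rw [Finset.sum_eq_zero_iff_of_nonneg fun i _ => Finset.sum_nonneg fun j _ => hF i j]
  simp [Finset.sum_eq_zero_iff_of_nonneg fun j _ => hF _ j]

lemma bilinear_pos_iff {H : Type*} [Fintype H] {a b : H → ℝ} {W : H → H → ℝ}
    (ha : ∀ h, 0 ≤ a h) (hb : ∀ k, 0 ≤ b k) (hW : ∀ h k, 0 ≤ W h k) :
    0 < ∑ h, ∑ k, a h * W h k * b k ↔ ∃ h k, 0 < a h ∧ 0 < W h k ∧ 0 < b k := by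
  have hterm : ∀ h k, 0 ≤ a h * W h k * b k := fun h k =>
    mul_nonneg (mul_nonneg (ha h) (hW h k)) (hb k)
  rw [sum_pos_iff_of_nonneg fun h _ => sum_nonneg fun k _ => hterm h k]
  simp only [mem_univ, true_and, sum_pos_iff_of_nonneg fun k _ => hterm _ k,
    mul_pos_iff_of_nonneg_left (mul_nonneg (ha _) (hW _ _)),
    mul_pos_iff_of_nonneg_left (ha _), and_assoc]

lemma Relation.ReflTransGen.eq_of_linked {A H α : Type*} {R : H → H → Prop} {P : A → H → Prop}
    {v : A → α} (hcover : ∀ c, ∃ a, P a c)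
    (hrefl : ∀ h, R h h) (hlink : ∀ a b h k, P a h → R h k → P b k → v a = v b)
    {h k : H} (hhk : Relation.ReflTransGen R h k) {a b : A} (ha : P a h) (hb : P b k) :
    v a = v b := by
  induction hhk generalizing b with
  | refl => exact hlink a b h h ha (hrefl h) hb
  | @tail c k _ hck ih =>
    obtain ⟨a', ha'⟩ := hcover c
    exact (ih ha').trans (hlink a' b c k ha' hck hb)

theorem stmt11_general {A H : Type*} [Fintype A] [Fintype H]
    (r : A → (A → ℝ) → ℝ)
    (W : H → H → ℝ) (hW : ∀ h k, 0 ≤ W h k)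
    (hdiag : ∀ h, 0 < W h h)
    (hirr : ∀ h k, Relation.ReflTransGen (fun a b => 0 < W a b) h k)
    (f : (A → ℝ) → A → A → ℝ)
    (hsgn : ∀ (y : A → ℝ) i j, Real.sign (f y i j - f y j i) = Real.sign (r j y - r i y))
    (η : H → ℝ) (hη : ∀ h, 0 < η h)
    (x : A → H → ℝ) (hx : ∀ i h, 0 ≤ x i h) (hcol : ∀ h, ∑ i, x i h = η h)
    (y : A → ℝ) (hy : ∀ i, y i = ∑ h, x i h) :
    ((1/2) * ∑ i : A, ∑ j : A,
        (∑ h, ∑ k, x i h * W h k * x j k) * (f y j i - f y i j) * (r i y - r j y) = 0)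
    ↔ (∀ i j, 0 < y i → 0 < y j → r i y = r j y) := by
  have hΛ : ∀ i j, 0 ≤ ∑ h, ∑ k, x i h * W h k * x j k := fun i j =>
    sum_nonneg fun h _ => sum_nonneg fun k _ =>
      mul_nonneg (mul_nonneg (hx i h) (hW h k)) (hx j k)
  have hplayed : ∀ i, 0 < y i ↔ ∃ h, 0 < x i h := fun i => by
    simp [hy i, sum_pos_iff_of_nonneg fun h _ => hx i h]
  have hcover : ∀ h, ∃ i, 0 < x i h := fun h => by
    have hpos : 0 < ∑ i, x i h := hcol h ▸ hη h
    simpa [sum_pos_iff_of_nonneg fun i _ => hx i h] using hpos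
  rw [mul_eq_zero, or_iff_right (by norm_num), Fintype.sum_sum_eq_zero_iff_of_nonneg
    fun i j => Real.mul_mul_nonneg_of_sign_eq (hΛ i j) (hsgn y j i)]
  simp only [Real.mul_mul_eq_zero_iff_of_sign_eq (hΛ _ _) (hsgn y _ _), sub_eq_zero,
    bilinear_pos_iff (hx _) (hx _) hW, hplayed]
  constructor
  · rintro hlink i j ⟨h, hi⟩ ⟨k, hj⟩
    exact (hirr h k).eq_of_linked hcover hdiag
      (fun a b h k ha hhk hb => hlink a b ⟨h, k, ha, hhk, hb⟩) hi hj
  · rintro hnash i j ⟨h, k, hi, -, hj⟩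
    exact hnash i j ⟨h, hi⟩ ⟨k, hj⟩

theorem stmt11 {A H : Type*} [Fintype A] [Fintype H] [DecidableEq A]
    (r : A → (A → ℝ) → ℝ)
    (Φ : (A → ℝ) → ℝ) (hΦ : Differentiable ℝ Φ)
    (hpot : ∀ (y : A → ℝ) i j,
      fderiv ℝ Φ y (Pi.single j 1) - fderiv ℝ Φ y (Pi.single i 1) = r j y - r i y)
    (W : H → H → ℝ) (hW : ∀ h k, 0 ≤ W h k) (hWsym : ∀ h k, W h k = W k h)
    (hdiag : ∀ h, 0 < W h h)
    (hirr : ∀ h k, Relation.ReflTransGen (fun a b => 0 < W a b) h k)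
    (f : (A → ℝ) → A → A → ℝ) (hf : ∀ y i j, 0 ≤ f y i j)
    (hsgn : ∀ (y : A → ℝ) i j, Real.sign (f y i j - f y j i) = Real.sign (r j y - r i y))
    (η : H → ℝ) (hη : ∀ h, 0 < η h) (hηsum : ∑ h, η h = 1)
    (x : A → H → ℝ) (hx : ∀ i h, 0 ≤ x i h) (hcol : ∀ h, ∑ i, x i h = η h)
    (y : A → ℝ) (hy : ∀ i, y i = ∑ h, x i h) :
    ((1/2) * ∑ i : A, ∑ j : A,
        (∑ h, ∑ k, x i h * W h k * x j k) * (f y j i - f y i j) * (r i y - r j y) = 0)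
    ↔ (∀ i j, 0 < y i → 0 < y j → r i y = r j y) :=
  stmt11_general r W hW hdiag hirr f hsgn η hη x hx hcol y hy
end
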